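/- For M an (A,B)-Yetter-Drinfeld Hom-module and N a (C,D)-Yetter-Drinfeld Hom-module, the braiding c_{M,N}(m⊗n) = ν(n₍₀₎) ⊗ B⁻¹(n₍₁₎)·μ⁻¹(m) is H-colinear: ρ_{ᴹN⊗M}(c_{M,N}(m⊗n)) = (c_{M,N}⊗id)ρ_{M⊗N}(m⊗n), where ρ_{M⊗N}(m⊗n) = (m₍₀₎⊗n₍₀₎)⊗n₍₁₎m₍₁₎ and the coaction on ᴹN is n ↦ n₍₀₎⊗AB⁻¹(n₍₁₎). -/

import Mathlib

/-!
Write `f = B⁻¹ ∘ α` and `ρ(m) = m₍₀₎ ⊗ m₍₁₎`. Evaluated at `m ⊗ n`, both sides of the colinearity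
are linear images of `n₍₀₎₍₀₎ ⊗ n₍₀₎₍₁₎ ⊗ α⁻¹(n₍₁₎)`, which Hom-coassociativity of `N` rewrites as
`ν⁻¹(n₍₀₎) ⊗ n₍₁₎₍₁₎ ⊗ n₍₁₎₍₂₎`. It then suffices to show, for every `y ∈ H` and `m ∈ M`,
`ρ(f(y₍₂₎)·m) · A f(y₍₁₎) = B⁻¹(y₍₁₎)·m₍₀₎ ⊗ α(y₍₂₎) α(m₍₁₎)`.
The Yetter–Drinfeld condition expands the left side and Hom-associativity collects the factor
`A(S⁻¹(f y₍₂₎₍₁₎) α⁻¹(f y₍₁₎))`. Since `S` is anti-multiplicative, `S⁻¹(y₍₂₎) y₍₁₎ = ε(y) 1`, and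
together with Hom-coassociativity this contracts `S⁻¹(y₍₂₎₍₁₎) α⁻¹(y₍₁₎) ⊗ y₍₂₎₍₂₎` to `1 ⊗ α⁻²(y)`,
which gives the right side.
-/

open TensorProduct

/-- A monoidal Hom-Hopf algebra (with bijective antipode) over a field `k`. -/
structure HomHopf (k : Type*) [Field k] (H : Type*) [AddCommGroup H] [Module k H] where
  mul : H →ₗ[k] H →ₗ[k] H
  one : H
  a : H ≃ₗ[k] H
  comul : H →ₗ[k] H ⊗[k] H
  counit : H →ₗ[k] k
  S : H ≃ₗ[k] H
  hom_assoc : ∀ x y z : H, mul (a x) (mul y z) = mul (mul x y) (a z)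
  a_mul : ∀ x y : H, a (mul x y) = mul (a x) (a y)
  mul_one' : ∀ x : H, mul x one = a x
  one_mul' : ∀ x : H, mul one x = a x
  a_one : a one = one
  hom_coassoc : (TensorProduct.map a.symm.toLinearMap comul).comp comul
      = (TensorProduct.assoc k H H H).toLinearMap.comp
          ((TensorProduct.map comul a.symm.toLinearMap).comp comul)
  comul_a : ∀ x : H, comul (a x) = TensorProduct.map a.toLinearMap a.toLinearMap (comul x)
  counit_comul : ∀ x : H,
    (TensorProduct.lid k H) ((TensorProduct.map counit LinearMap.id) (comul x)) = a.symm x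
  comul_counit : ∀ x : H,
    (TensorProduct.rid k H) ((TensorProduct.map LinearMap.id counit) (comul x)) = a.symm x
  counit_a : ∀ x : H, counit (a x) = counit x
  comul_mul : ∀ x y : H, comul (mul x y)
      = (TensorProduct.map (TensorProduct.lift mul) (TensorProduct.lift mul))
          ((TensorProduct.tensorTensorTensorComm k H H H H) (comul x ⊗ₜ[k] comul y))
  comul_one : comul one = one ⊗ₜ[k] one
  counit_mul : ∀ x y : H, counit (mul x y) = counit x * counit y
  counit_one : counit one = 1
  S_a : ∀ x : H, S (a x) = a (S x)
  antipode_left : ∀ x : H,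
    (TensorProduct.lift mul) ((TensorProduct.map S.toLinearMap LinearMap.id) (comul x))
      = counit x • one
  antipode_right : ∀ x : H,
    (TensorProduct.lift mul) ((TensorProduct.map LinearMap.id S.toLinearMap) (comul x))
      = counit x • one

/-- A monoidal Hom-Hopf algebra automorphism. -/
structure IsHomHopfAuto {k : Type*} [Field k] {H : Type*} [AddCommGroup H] [Module k H]
    (HH : HomHopf k H) (f : H ≃ₗ[k] H) : Prop where
  map_mul : ∀ x y : H, f (HH.mul x y) = HH.mul (f x) (f y)
  map_one : f HH.one = HH.one
  map_comul : ∀ x : H, HH.comul (f x)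
      = TensorProduct.map f.toLinearMap f.toLinearMap (HH.comul x)
  map_counit : ∀ x : H, HH.counit (f x) = HH.counit x
  map_a : ∀ x : H, f (HH.a x) = HH.a (f x)

/-- A left-right (A,B)-Yetter-Drinfeld Hom-module over `HH`. -/
structure YDModule {k : Type*} [Field k] {H : Type*} [AddCommGroup H] [Module k H]
    (HH : HomHopf k H) (A B : H ≃ₗ[k] H)
    (M : Type*) [AddCommGroup M] [Module k M] where
  act : H →ₗ[k] M →ₗ[k] M
  coact : M →ₗ[k] M ⊗[k] H
  mu : M ≃ₗ[k] M
  hom_act : ∀ (h g : H) (m : M), act (HH.a h) (act g m) = act (HH.mul h g) (mu m)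
  mu_act : ∀ (h : H) (m : M), mu (act h m) = act (HH.a h) (mu m)
  one_act : ∀ m : M, act HH.one m = mu m
  hom_coact : (TensorProduct.map mu.symm.toLinearMap HH.comul).comp coact
      = (TensorProduct.assoc k M H H).toLinearMap.comp
          ((TensorProduct.map coact HH.a.symm.toLinearMap).comp coact)
  coact_mu : ∀ m : M, coact (mu m)
      = TensorProduct.map mu.toLinearMap HH.a.toLinearMap (coact m)
  coact_counit : ∀ m : M,
    (TensorProduct.rid k M) ((TensorProduct.map LinearMap.id HH.counit) (coact m)) = mu.symm m
  compat : ∀ (h : H) (m : M) (n : ℕ) (h1 h2 : Fin n → H),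
      HH.comul h = ∑ i, h1 i ⊗ₜ[k] h2 i →
      ∀ (p : ℕ) (h21 h22 : Fin n → Fin p → H),
      (∀ i, HH.comul (h2 i) = ∑ j, h21 i j ⊗ₜ[k] h22 i j) →
      ∀ (q : ℕ) (m0 : Fin q → M) (m1 : Fin q → H),
      coact m = ∑ l, m0 l ⊗ₜ[k] m1 l →
      coact (act h m) = ∑ i, ∑ j, ∑ l,
        act (HH.a (h21 i j)) (m0 l) ⊗ₜ[k]
          HH.mul (HH.mul (B (h22 i j)) (HH.a.symm (m1 l))) (A (HH.S.symm (h1 i)))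

namespace TensorProduct

variable {k : Type*} [Field k] {P Q : Type*} [AddCommGroup P] [Module k P]
  [AddCommGroup Q] [Module k Q]

lemma exists_fin_sum_tmul_eq_of_le {q p : ℕ} (hqp : q ≤ p) (f : Fin q → P) (g : Fin q → Q) :
    ∃ (f' : Fin p → P) (g' : Fin p → Q), ∑ i, f i ⊗ₜ[k] g i = ∑ j, f' j ⊗ₜ[k] g' j := by
  have hinj := Fin.castLE_injective hqp
  refine ⟨Function.extend (Fin.castLE hqp) f 0, Function.extend (Fin.castLE hqp) g 0,
    Fintype.sum_of_injective _ hinj _ _ (fun j hj => ?_) (fun i => ?_)⟩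
  · rw [Function.extend_apply' _ _ _ hj, Pi.zero_apply, zero_tmul]
  · rw [hinj.extend_apply, hinj.extend_apply]

lemma exists_uniform_fin_sum_tmul_eq {ι : Type*} [Fintype ι] (F : ι → P ⊗[k] Q) :
    ∃ (p : ℕ) (f : ι → Fin p → P) (g : ι → Fin p → Q), ∀ i, F i = ∑ j, f i j ⊗ₜ[k] g i j := by
  choose q f g hF using fun i => exists_sum_tmul_eq (F i)
  classical
  have hle : ∀ i, q i ≤ Finset.univ.sup q := fun i => Finset.le_sup (Finset.mem_univ i)
  choose f' g' hpad using fun i => exists_fin_sum_tmul_eq_of_le (k := k) (hle i) (f i) (g i)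
  exact ⟨_, f', g', fun i => (hF i).trans (hpad i)⟩

end TensorProduct

section Automorphisms

variable {k : Type*} [Field k] {H : Type*} [AddCommGroup H] [Module k H] {HH : HomHopf k H}
  {f g : H ≃ₗ[k] H}

lemma HomHopf.isHomHopfAuto_a (HH : HomHopf k H) : IsHomHopfAuto HH HH.a where
  map_mul := HH.a_mul
  map_one := HH.a_one
  map_comul := HH.comul_a
  map_counit := HH.counit_a
  map_a _ := rfl

namespace IsHomHopfAuto

lemma symm (hf : IsHomHopfAuto HH f) : IsHomHopfAuto HH f.symm where
  map_mul x y := f.injective (by simp [hf.map_mul])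
  map_one := f.injective (by simp [hf.map_one])
  map_comul x := by
    conv_rhs => rw [← f.apply_symm_apply x, hf.map_comul, ← LinearMap.comp_apply,
      ← TensorProduct.map_comp]
    simp
  map_counit x := by rw [← hf.map_counit, LinearEquiv.apply_symm_apply]
  map_a x := f.injective (by simp [hf.map_a])

lemma trans (hf : IsHomHopfAuto HH f) (hg : IsHomHopfAuto HH g) :
    IsHomHopfAuto HH (f.trans g) where
  map_mul x y := by simp [hf.map_mul, hg.map_mul]
  map_one := by simp [hf.map_one, hg.map_one]
  map_comul x := by
    rw [LinearEquiv.trans_apply, hg.map_comul, hf.map_comul, ← LinearMap.comp_apply,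
      ← TensorProduct.map_comp]
    rfl
  map_counit x := by simp [hf.map_counit, hg.map_counit]
  map_a x := by simp [hf.map_a, hg.map_a]

lemma map_a_symm (hf : IsHomHopfAuto HH f) (x : H) : f (HH.a.symm x) = HH.a.symm (f x) :=
  HH.a.injective (by rw [← hf.map_a, LinearEquiv.apply_symm_apply, LinearEquiv.apply_symm_apply])

lemma comul_eq_sum (hf : IsHomHopfAuto HH f) {n : ℕ} {y : H} {y₁ y₂ : Fin n → H}
    (hy : HH.comul y = ∑ i, y₁ i ⊗ₜ[k] y₂ i) :
    HH.comul (f y) = ∑ i, f (y₁ i) ⊗ₜ[k] f (y₂ i) := by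
  simp [hf.map_comul, hy]

end IsHomHopfAuto

end Automorphisms

namespace HomHopf

variable {k : Type*} [Field k] {H : Type*} [AddCommGroup H] [Module k H] (HH : HomHopf k H)
  {X Y : Type*} [AddCommGroup X] [Module k X] [AddCommGroup Y] [Module k Y]

lemma a_symm_mul (x y : H) :
    HH.a.symm (HH.mul x y) = HH.mul (HH.a.symm x) (HH.a.symm y) :=
  HH.isHomHopfAuto_a.symm.map_mul x y

lemma S_a_symm (x : H) : HH.S (HH.a.symm x) = HH.a.symm (HH.S x) :=
  HH.a.injective (by rw [← HH.S_a, LinearEquiv.apply_symm_apply, LinearEquiv.apply_symm_apply])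

lemma S_one : HH.S HH.one = HH.one := by
  have h := HH.antipode_left HH.one
  simp only [HH.comul_one, map_tmul, LinearEquiv.coe_coe, LinearMap.id_coe, id_eq, lift.tmul,
    HH.mul_one', HH.counit_one, one_smul] at h
  exact HH.a.injective (h.trans HH.a_one.symm)

lemma mul_flip_comp_mul_flip (b c : H) :
    HH.mul.flip c ∘ₗ HH.mul.flip b = HH.mul.flip (HH.mul b (HH.a.symm c)) ∘ₗ HH.a.toLinearMap := by
  ext x
  simp only [LinearMap.comp_apply, LinearMap.flip_apply, LinearEquiv.coe_coe]
  rw [HH.hom_assoc, LinearEquiv.apply_symm_apply]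

noncomputable def codiagonal : (X ⊗[k] H) ⊗[k] (Y ⊗[k] H) →ₗ[k] (X ⊗[k] Y) ⊗[k] H :=
  (lift HH.mul.flip).lTensor (X ⊗[k] Y) ∘ₗ (tensorTensorTensorComm k X H Y H).toLinearMap

@[simp] lemma codiagonal_tmul (x : X) (g : H) (y : Y) (h : H) :
    HH.codiagonal ((x ⊗ₜ[k] g) ⊗ₜ[k] (y ⊗ₜ[k] h)) = (x ⊗ₜ[k] y) ⊗ₜ[k] HH.mul h g := by
  simp [codiagonal]

lemma codiagonal_tmul_left (x : X) (g : H) (w : Y ⊗[k] H) :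
    HH.codiagonal ((x ⊗ₜ[k] g) ⊗ₜ[k] w)
      = (TensorProduct.assoc k X Y H).symm (x ⊗ₜ[k] (HH.mul.flip g).lTensor Y w) := by
  induction w using TensorProduct.induction_on with
  | zero => simp
  | tmul y h => simp
  | add w w' hw hw' => simp only [tmul_add, map_add, hw, hw']

/-- On the two Hom-coassociative rearrangements of `Δ²x ⊗ Δ²y` this map takes the values
`S (x y)` and `S y * S x`. -/
noncomputable def antipodeMulTriple : (H ⊗[k] (H ⊗[k] H)) ⊗[k] (H ⊗[k] (H ⊗[k] H)) →ₗ[k] H :=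
  lift HH.mul ∘ₗ
    map (HH.a.toLinearMap ∘ₗ HH.S.toLinearMap ∘ₗ lift HH.mul)
      (lift HH.mul ∘ₗ
        map (lift HH.mul)
          (lift HH.mul ∘ₗ (TensorProduct.comm k H H).toLinearMap ∘ₗ
            map HH.S.toLinearMap HH.S.toLinearMap) ∘ₗ
        (tensorTensorTensorComm k H H H H).toLinearMap) ∘ₗ
    (tensorTensorTensorComm k H (H ⊗[k] H) H (H ⊗[k] H)).toLinearMap

@[simp] lemma antipodeMulTriple_tmul (u v w u' v' w' : H) :
    HH.antipodeMulTriple ((u ⊗ₜ[k] (v ⊗ₜ[k] w)) ⊗ₜ[k] (u' ⊗ₜ[k] (v' ⊗ₜ[k] w')))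
      = HH.mul (HH.a (HH.S (HH.mul u u')))
          (HH.mul (HH.mul v v') (HH.mul (HH.S w') (HH.S w))) := by
  simp [antipodeMulTriple]

variable {HH} {m n p q : ℕ} {x y : H} {x₁ x₂ : Fin m → H} {y₁ y₂ : Fin n → H}

lemma sum_counit_smul (hy : HH.comul y = ∑ i, y₁ i ⊗ₜ[k] y₂ i) :
    ∑ i, HH.counit (y₁ i) • y₂ i = HH.a.symm y := by
  simpa [hy, map_sum] using HH.counit_comul y

lemma sum_smul_counit (hy : HH.comul y = ∑ i, y₁ i ⊗ₜ[k] y₂ i) :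
    ∑ i, HH.counit (y₂ i) • y₁ i = HH.a.symm y := by
  simpa [hy, map_sum] using HH.comul_counit y

lemma sum_S_mul (hy : HH.comul y = ∑ i, y₁ i ⊗ₜ[k] y₂ i) :
    ∑ i, HH.mul (HH.S (y₁ i)) (y₂ i) = HH.counit y • HH.one := by
  simpa [hy, map_sum] using HH.antipode_left y

lemma sum_mul_S (hy : HH.comul y = ∑ i, y₁ i ⊗ₜ[k] y₂ i) :
    ∑ i, HH.mul (y₁ i) (HH.S (y₂ i)) = HH.counit y • HH.one := by
  simpa [hy, map_sum] using HH.antipode_right y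

lemma comul_mul_eq_sum (hx : HH.comul x = ∑ j, x₁ j ⊗ₜ[k] x₂ j)
    (hy : HH.comul y = ∑ i, y₁ i ⊗ₜ[k] y₂ i) :
    HH.comul (HH.mul x y) = ∑ j, ∑ i, HH.mul (x₁ j) (y₁ i) ⊗ₜ[k] HH.mul (x₂ j) (y₂ i) := by
  rw [HH.comul_mul, hx, hy]
  simp only [sum_tmul, tmul_sum, map_sum, tensorTensorTensorComm_tmul, map_tmul, lift.tmul]
  exact Finset.sum_comm

lemma sum_coassoc {y₁₁ y₁₂ : Fin n → Fin p → H} {y₂₁ y₂₂ : Fin n → Fin q → H}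
    (hy : HH.comul y = ∑ i, y₁ i ⊗ₜ[k] y₂ i)
    (hy₁ : ∀ i, HH.comul (y₁ i) = ∑ j, y₁₁ i j ⊗ₜ[k] y₁₂ i j)
    (hy₂ : ∀ i, HH.comul (y₂ i) = ∑ j, y₂₁ i j ⊗ₜ[k] y₂₂ i j) :
    ∑ i, ∑ j, HH.a.symm (y₁ i) ⊗ₜ[k] (y₂₁ i j ⊗ₜ[k] y₂₂ i j)
      = ∑ i, ∑ j, y₁₁ i j ⊗ₜ[k] (y₁₂ i j ⊗ₜ[k] HH.a.symm (y₂ i)) := by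
  have h := LinearMap.congr_fun HH.hom_coassoc y
  simpa [hy, hy₁, hy₂, map_sum, tmul_sum, sum_tmul] using h

lemma sum_mul_mul_S_mul_S (hx : HH.comul x = ∑ j, x₁ j ⊗ₜ[k] x₂ j)
    (hy : HH.comul y = ∑ i, y₁ i ⊗ₜ[k] y₂ i) :
    ∑ j, ∑ i, HH.mul (HH.mul (x₁ j) (y₁ i)) (HH.mul (HH.S (y₂ i)) (HH.S (x₂ j)))
      = HH.counit x • HH.counit y • HH.one := by
  have hy' : ∑ i, HH.mul (HH.a.symm (y₁ i)) (HH.S (HH.a.symm (y₂ i)))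
      = HH.counit y • HH.one := by
    rw [← HH.isHomHopfAuto_a.symm.map_counit]
    exact sum_mul_S (HH.isHomHopfAuto_a.symm.comul_eq_sum hy)
  have hx' : ∑ j, HH.mul (HH.a (x₁ j)) (HH.S (HH.a (x₂ j))) = HH.counit x • HH.one := by
    rw [← HH.counit_a]
    exact sum_mul_S (HH.isHomHopfAuto_a.comul_eq_sum hx)
  have reassoc : ∀ j i, HH.mul (HH.mul (x₁ j) (y₁ i)) (HH.mul (HH.S (y₂ i)) (HH.S (x₂ j)))
      = HH.mul (HH.mul (x₁ j) (HH.mul (HH.a.symm (y₁ i)) (HH.S (HH.a.symm (y₂ i)))))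
          (HH.a (HH.S (x₂ j))) := by
    intro j i
    have e₁ : HH.mul (x₁ j) (y₁ i) = HH.a (HH.mul (HH.a.symm (x₁ j)) (HH.a.symm (y₁ i))) := by
      rw [← HH.a_symm_mul, LinearEquiv.apply_symm_apply]
    have e₂ : HH.S (y₂ i) = HH.a (HH.S (HH.a.symm (y₂ i))) := by
      rw [HH.S_a_symm, LinearEquiv.apply_symm_apply]
    rw [e₁, HH.hom_assoc, e₂, ← HH.hom_assoc (HH.a.symm (x₁ j)), LinearEquiv.apply_symm_apply]
  calc _ = ∑ j, HH.mul (HH.mul (x₁ j) (HH.counit y • HH.one)) (HH.a (HH.S (x₂ j))) := by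
        simp only [reassoc, ← map_sum, ← LinearMap.sum_apply, hy']
    _ = HH.counit y • ∑ j, HH.mul (HH.a (x₁ j)) (HH.S (HH.a (x₂ j))) := by
        simp only [map_smul, HH.mul_one', LinearMap.smul_apply, HH.S_a, Finset.smul_sum]
    _ = HH.counit x • HH.counit y • HH.one := by rw [hx', smul_comm]

lemma sum_S_mul_mul_mul (hx : HH.comul x = ∑ j, x₁ j ⊗ₜ[k] x₂ j)
    (hy : HH.comul y = ∑ i, y₁ i ⊗ₜ[k] y₂ i) :
    ∑ j, ∑ i, HH.mul (HH.S (HH.mul (x₁ j) (y₁ i))) (HH.mul (x₂ j) (y₂ i))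
      = HH.counit x • HH.counit y • HH.one := by
  simpa [comul_mul_eq_sum hx hy, HH.counit_mul, mul_smul, map_sum] using
    HH.antipode_left (HH.mul x y)

lemma antipodeMulTriple_left {x₂₁ x₂₂ : Fin m → Fin p → H} {y₂₁ y₂₂ : Fin n → Fin q → H}
    (hx : HH.comul x = ∑ j, x₁ j ⊗ₜ[k] x₂ j) (hy : HH.comul y = ∑ i, y₁ i ⊗ₜ[k] y₂ i)
    (hx₂ : ∀ j, HH.comul (x₂ j) = ∑ s, x₂₁ j s ⊗ₜ[k] x₂₂ j s)
    (hy₂ : ∀ i, HH.comul (y₂ i) = ∑ t, y₂₁ i t ⊗ₜ[k] y₂₂ i t) :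
    HH.antipodeMulTriple
        ((∑ j, ∑ s, HH.a.symm (x₁ j) ⊗ₜ[k] (x₂₁ j s ⊗ₜ[k] x₂₂ j s)) ⊗ₜ[k]
          (∑ i, ∑ t, HH.a.symm (y₁ i) ⊗ₜ[k] (y₂₁ i t ⊗ₜ[k] y₂₂ i t)))
      = HH.S (HH.mul x y) := by
  have hS : ∀ u v : H, HH.a (HH.S (HH.mul (HH.a.symm u) (HH.a.symm v))) = HH.S (HH.mul u v) := by
    intro u v
    rw [← HH.a_symm_mul, HH.S_a_symm, LinearEquiv.apply_symm_apply]
  calc _ = ∑ j, ∑ i, HH.mul (HH.S (HH.mul (x₁ j) (y₁ i)))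
          (∑ s, ∑ t, HH.mul (HH.mul (x₂₁ j s) (y₂₁ i t))
            (HH.mul (HH.S (y₂₂ i t)) (HH.S (x₂₂ j s)))) := by
        simp only [sum_tmul]
        simp only [tmul_sum, map_sum, antipodeMulTriple_tmul, hS]
        exact Finset.sum_congr rfl fun j _ => Finset.sum_comm
    _ = ∑ j, ∑ i, (HH.counit (x₂ j) • HH.counit (y₂ i) • HH.a (HH.S (HH.mul (x₁ j) (y₁ i)))) := by
        simp only [sum_mul_mul_S_mul_S (hx₂ _) (hy₂ _), map_smul, HH.mul_one']
    _ = HH.S (HH.mul x y) := by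
        rw [← hS, ← sum_smul_counit hx, ← sum_smul_counit hy]
        simp only [map_sum, map_smul, LinearMap.sum_apply, LinearMap.smul_apply, Finset.smul_sum]
        rw [Finset.sum_comm]
        exact Finset.sum_congr rfl fun _ _ => Finset.sum_congr rfl fun _ _ =>
          smul_comm (_ : k) (_ : k) _

lemma antipodeMulTriple_right {x₁₁ x₁₂ : Fin m → Fin p → H} {y₁₁ y₁₂ : Fin n → Fin q → H}
    (hx : HH.comul x = ∑ j, x₁ j ⊗ₜ[k] x₂ j) (hy : HH.comul y = ∑ i, y₁ i ⊗ₜ[k] y₂ i)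
    (hx₁ : ∀ j, HH.comul (x₁ j) = ∑ s, x₁₁ j s ⊗ₜ[k] x₁₂ j s)
    (hy₁ : ∀ i, HH.comul (y₁ i) = ∑ t, y₁₁ i t ⊗ₜ[k] y₁₂ i t) :
    HH.antipodeMulTriple
        ((∑ j, ∑ s, x₁₁ j s ⊗ₜ[k] (x₁₂ j s ⊗ₜ[k] HH.a.symm (x₂ j))) ⊗ₜ[k]
          (∑ i, ∑ t, y₁₁ i t ⊗ₜ[k] (y₁₂ i t ⊗ₜ[k] HH.a.symm (y₂ i))))
      = HH.mul (HH.S y) (HH.S x) := by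
  have hS : ∀ u v : H, HH.a (HH.mul (HH.S (HH.a.symm u)) (HH.S (HH.a.symm v)))
      = HH.mul (HH.S u) (HH.S v) := by
    intro u v
    rw [HH.S_a_symm, HH.S_a_symm, ← HH.a_symm_mul, LinearEquiv.apply_symm_apply]
  calc _ = ∑ j, ∑ i, HH.mul
          (∑ s, ∑ t, HH.mul (HH.S (HH.mul (x₁₁ j s) (y₁₁ i t))) (HH.mul (x₁₂ j s) (y₁₂ i t)))
          (HH.mul (HH.S (y₂ i)) (HH.S (x₂ j))) := by
        simp only [sum_tmul]
        simp only [tmul_sum, map_sum, LinearMap.sum_apply, antipodeMulTriple_tmul, HH.hom_assoc, hS]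
        exact Finset.sum_congr rfl fun j _ => Finset.sum_comm
    _ = ∑ j, ∑ i, (HH.counit (x₁ j) • HH.counit (y₁ i) •
          HH.a (HH.mul (HH.S (y₂ i)) (HH.S (x₂ j)))) := by
        simp only [sum_S_mul_mul_mul (hx₁ _) (hy₁ _), map_smul, LinearMap.smul_apply,
          HH.one_mul']
    _ = HH.mul (HH.S y) (HH.S x) := by
        rw [← hS, ← sum_counit_smul hx, ← sum_counit_smul hy]
        simp only [map_sum, map_smul, LinearMap.sum_apply, LinearMap.smul_apply, Finset.smul_sum]

variable (HH) in
theorem S_mul (x y : H) : HH.S (HH.mul x y) = HH.mul (HH.S y) (HH.S x) := by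
  obtain ⟨m, x₁, x₂, hx⟩ := exists_sum_tmul_eq (HH.comul x)
  obtain ⟨n, y₁, y₂, hy⟩ := exists_sum_tmul_eq (HH.comul y)
  obtain ⟨p, x₁₁, x₁₂, hx₁⟩ := exists_uniform_fin_sum_tmul_eq fun j => HH.comul (x₁ j)
  obtain ⟨p', x₂₁, x₂₂, hx₂⟩ := exists_uniform_fin_sum_tmul_eq fun j => HH.comul (x₂ j)
  obtain ⟨q, y₁₁, y₁₂, hy₁⟩ := exists_uniform_fin_sum_tmul_eq fun i => HH.comul (y₁ i)
  obtain ⟨q', y₂₁, y₂₂, hy₂⟩ := exists_uniform_fin_sum_tmul_eq fun i => HH.comul (y₂ i)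
  rw [← antipodeMulTriple_left hx hy hx₂ hy₂, sum_coassoc hx hx₁ hx₂, sum_coassoc hy hy₁ hy₂,
    antipodeMulTriple_right hx hy hx₁ hy₁]

lemma sum_S_symm_mul (hy : HH.comul y = ∑ i, y₁ i ⊗ₜ[k] y₂ i) :
    ∑ i, HH.mul (HH.S.symm (y₂ i)) (y₁ i) = HH.counit y • HH.one := by
  apply HH.S.injective
  simp [map_sum, S_mul, sum_S_mul hy, S_one]

lemma sum_S_symm_mul_tmul {y₂₁ y₂₂ : Fin n → Fin p → H}
    (hy : HH.comul y = ∑ i, y₁ i ⊗ₜ[k] y₂ i)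
    (hy₂ : ∀ i, HH.comul (y₂ i) = ∑ j, y₂₁ i j ⊗ₜ[k] y₂₂ i j) :
    ∑ i, ∑ j, HH.mul (HH.S.symm (y₂₁ i j)) (HH.a.symm (y₁ i)) ⊗ₜ[k] y₂₂ i j
      = HH.one ⊗ₜ[k] HH.a.symm (HH.a.symm y) := by
  obtain ⟨q, y₁₁, y₁₂, hy₁⟩ := exists_uniform_fin_sum_tmul_eq fun i => HH.comul (y₁ i)
  let contract : H ⊗[k] (H ⊗[k] H) →ₗ[k] H ⊗[k] H :=
    map (lift (HH.mul ∘ₗ HH.S.symm.toLinearMap).flip) LinearMap.id ∘ₗ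
      (TensorProduct.assoc k H H H).symm.toLinearMap
  have h := congrArg contract (sum_coassoc hy hy₁ hy₂)
  simp only [contract, map_sum, LinearMap.comp_apply, LinearEquiv.coe_coe, assoc_symm_tmul,
    map_tmul, lift.tmul, LinearMap.flip_apply, LinearMap.id_coe, id_eq] at h
  rw [h, ← sum_counit_smul hy]
  simp only [← sum_tmul, sum_S_symm_mul (hy₁ _), map_sum, map_smul, tmul_sum, tmul_smul, smul_tmul]

end HomHopf

namespace YDModule

variable {k : Type*} [Field k] {H : Type*} [AddCommGroup H] [Module k H] {HH : HomHopf k H}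
  {A B : H ≃ₗ[k] H} {M : Type*} [AddCommGroup M] [Module k M] (Y : YDModule HH A B M)

noncomputable def coactActCore (m : M) : H →ₗ[k] M ⊗[k] H :=
  lift (LinearMap.mk₂ k
    (fun u v => map (Y.act (HH.a u)) (HH.mul (B v) ∘ₗ HH.a.symm.toLinearMap) (Y.coact m))
    (fun _ _ _ => by simp [map_add_left])
    (fun _ _ _ => by simp [map_smul_left])
    (fun _ _ _ => by simp [LinearMap.add_comp, map_add_right])
    (fun _ _ _ => by simp [LinearMap.smul_comp, map_smul_right])) ∘ₗ HH.comul

noncomputable def twistedCoactAct (m : M) : H →ₗ[k] H →ₗ[k] M ⊗[k] H :=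
  LinearMap.mk₂ k
    (fun g y => (HH.mul.flip (A (B.symm (HH.a g)))).lTensor M
      (Y.coact (Y.act (B.symm (HH.a y)) m)))
    (fun _ _ _ => by simp [LinearMap.lTensor_add])
    (fun _ _ _ => by simp [LinearMap.lTensor_smul])
    (fun _ _ _ => by simp)
    (fun _ _ _ => by simp)

noncomputable def actTwistedCoact (m : M) : H →ₗ[k] H →ₗ[k] M ⊗[k] H :=
  LinearMap.mk₂ k
    (fun g y => map (Y.act (B.symm g)) (HH.mul (HH.a y) ∘ₗ HH.a.toLinearMap) (Y.coact m))
    (fun _ _ _ => by simp [map_add_left])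
    (fun _ _ _ => by simp [map_smul_left])
    (fun _ _ _ => by simp [LinearMap.add_comp, map_add_right])
    (fun _ _ _ => by simp [LinearMap.smul_comp, map_smul_right])

lemma assoc_map_coact_coact (m : M) :
    TensorProduct.assoc k M H H (map Y.coact HH.a.symm.toLinearMap (Y.coact m))
      = map Y.mu.symm.toLinearMap HH.comul (Y.coact m) :=
  (LinearMap.congr_fun Y.hom_coact m).symm

variable {Y}

lemma coactActCore_eq_sum (m : M) {n : ℕ} {v : H} {v₁ v₂ : Fin n → H}
    (hv : HH.comul v = ∑ i, v₁ i ⊗ₜ[k] v₂ i) :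
    Y.coactActCore m v
      = ∑ i, map (Y.act (HH.a (v₁ i))) (HH.mul (B (v₂ i)) ∘ₗ HH.a.symm.toLinearMap)
          (Y.coact m) := by
  simp [coactActCore, hv]

lemma coact_act_eq_sum (m : M) {n : ℕ} {h : H} {h₁ h₂ : Fin n → H}
    (hh : HH.comul h = ∑ i, h₁ i ⊗ₜ[k] h₂ i) :
    Y.coact (Y.act h m)
      = ∑ i, (HH.mul.flip (A (HH.S.symm (h₁ i)))).lTensor M (Y.coactActCore m (h₂ i)) := by
  obtain ⟨p, h₂₁, h₂₂, hh₂⟩ := exists_uniform_fin_sum_tmul_eq fun i => HH.comul (h₂ i)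
  obtain ⟨q, m₀, m₁, hm⟩ := exists_sum_tmul_eq (Y.coact m)
  rw [Y.compat h m n h₁ h₂ hh p h₂₁ h₂₂ hh₂ q m₀ m₁ hm]
  simp [coactActCore_eq_sum m (hh₂ _), hm, map_sum]

lemma lTensor_coactActCore_a_symm (hB : IsHomHopfAuto HH B) (m : M) (y : H) :
    (HH.mul.flip HH.one ∘ₗ HH.a.toLinearMap).lTensor M (Y.coactActCore m (B.symm (HH.a.symm y)))
      = lift (Y.actTwistedCoact m) (HH.comul y) := by
  obtain ⟨n, y₁, y₂, hy⟩ := exists_sum_tmul_eq (HH.comul y)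
  have hy' := hB.symm.comul_eq_sum (HH.isHomHopfAuto_a.symm.comul_eq_sum hy)
  simp only [coactActCore_eq_sum m hy', hy, map_sum, LinearMap.lTensor_map, lift.tmul,
    actTwistedCoact, LinearMap.mk₂_apply, ← hB.symm.map_a, LinearEquiv.apply_symm_apply]
  refine Finset.sum_congr rfl fun i _ => ?_
  congr 2
  ext x
  simp [HH.mul_one', HH.a_mul]

theorem lift_twistedCoactAct_comp_comul (hA : IsHomHopfAuto HH A) (hB : IsHomHopfAuto HH B)
    (m : M) :
    lift (Y.twistedCoactAct m) ∘ₗ HH.comul = lift (Y.actTwistedCoact m) ∘ₗ HH.comul := by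
  refine LinearMap.ext fun y => ?_
  obtain ⟨n, y₁, y₂, hy⟩ := exists_sum_tmul_eq (HH.comul y)
  obtain ⟨p, y₂₁, y₂₂, hy₂⟩ := exists_uniform_fin_sum_tmul_eq fun i => HH.comul (y₂ i)
  set f := HH.a.trans B.symm
  have hf : IsHomHopfAuto HH f := HH.isHomHopfAuto_a.trans hB.symm
  let Φ : H →ₗ[k] H →ₗ[k] M ⊗[k] H :=
    (LinearMap.lTensorHom M ∘ₗ HH.mul.flip ∘ₗ A.toLinearMap).compl₂
      (HH.a.toLinearMap.lTensor M ∘ₗ Y.coactActCore m)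
  have twist : ∀ i, (HH.mul.flip (A (f (y₁ i)))).lTensor M (Y.coact (Y.act (f (y₂ i)) m))
      = ∑ j, Φ (HH.mul (HH.S.symm (f (y₂₁ i j))) (HH.a.symm (f (y₁ i)))) (f (y₂₂ i j)) := by
    intro i
    rw [coact_act_eq_sum m (hf.comul_eq_sum (hy₂ i)), map_sum]
    refine Finset.sum_congr rfl fun j _ => ?_
    rw [← LinearMap.comp_apply, ← LinearMap.lTensor_comp, HH.mul_flip_comp_mul_flip,
      LinearMap.lTensor_comp, ← hA.map_a_symm, ← hA.map_mul]
    rfl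
  have contract := congrArg (lift Φ)
    (HomHopf.sum_S_symm_mul_tmul (hf.comul_eq_sum hy) fun i => hf.comul_eq_sum (hy₂ i))
  simp only [map_sum, lift.tmul] at contract
  calc lift (Y.twistedCoactAct m) (HH.comul y)
      = ∑ i, ∑ j, Φ (HH.mul (HH.S.symm (f (y₂₁ i j))) (HH.a.symm (f (y₁ i)))) (f (y₂₂ i j)) := by
        simp only [hy, map_sum, lift.tmul, twistedCoactAct, LinearMap.mk₂_apply]
        exact Finset.sum_congr rfl fun i _ => twist i
    _ = Φ HH.one (HH.a.symm (HH.a.symm (f y))) := contract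
    _ = lift (Y.actTwistedCoact m) (HH.comul y) := by
        rw [← lTensor_coactActCore_a_symm hB]
        simp [Φ, f, hA.map_one, ← hB.symm.map_a_symm, LinearMap.lTensor_comp]

end YDModule

section Braiding

variable {k : Type*} [Field k] {H : Type*} [AddCommGroup H] [Module k H] {HH : HomHopf k H}
  {A B C D : H ≃ₗ[k] H} {M N : Type*} [AddCommGroup M] [Module k M] [AddCommGroup N] [Module k N]
  {YM : YDModule HH A B M} {YN : YDModule HH C D N} {c : M ⊗[k] N →ₗ[k] N ⊗[k] M}

lemma coact_braiding_eq {coactNM : (N ⊗[k] M) →ₗ[k] (N ⊗[k] M) ⊗[k] H}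
    (hc : ∀ m x, c (m ⊗ₜ[k] x)
      = map YN.mu.toLinearMap ((YM.act ∘ₗ B.symm.toLinearMap).flip (YM.mu.symm m)) (YN.coact x))
    (hNM : ∀ x m, coactNM (x ⊗ₜ[k] m) = HH.codiagonal
      ((A.toLinearMap ∘ₗ B.symm.toLinearMap).lTensor N (YN.coact x) ⊗ₜ[k] YM.coact m))
    (m : M) (x : N) :
    coactNM (c (m ⊗ₜ[k] x)) = (TensorProduct.assoc k N M H).symm
      (map YN.mu.toLinearMap (lift (YM.twistedCoactAct (YM.mu.symm m)))
        (TensorProduct.assoc k N H H (map YN.coact HH.a.symm.toLinearMap (YN.coact x)))) := by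
  rw [hc]
  induction YN.coact x using TensorProduct.induction_on with
  | zero => simp
  | add u v hu hv => simp only [map_add, hu, hv]
  | tmul n h =>
    simp only [map_tmul, LinearEquiv.coe_coe, LinearMap.flip_apply, LinearMap.coe_comp,
      Function.comp_apply, hNM, YN.coact_mu]
    induction YN.coact n using TensorProduct.induction_on with
    | zero => simp
    | add u v hu hv => simp only [map_add, add_tmul, hu, hv]
    | tmul n' g =>
      simp [HomHopf.codiagonal_tmul_left, YDModule.twistedCoactAct]

lemma map_braiding_coact_eq {coactMN : (M ⊗[k] N) →ₗ[k] (M ⊗[k] N) ⊗[k] H}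
    (hc : ∀ m x, c (m ⊗ₜ[k] x)
      = map YN.mu.toLinearMap ((YM.act ∘ₗ B.symm.toLinearMap).flip (YM.mu.symm m)) (YN.coact x))
    (hMN : ∀ m x, coactMN (m ⊗ₜ[k] x) = HH.codiagonal (YM.coact m ⊗ₜ[k] YN.coact x))
    (m : M) (x : N) :
    map c LinearMap.id (coactMN (m ⊗ₜ[k] x)) = (TensorProduct.assoc k N M H).symm
      (map YN.mu.toLinearMap (lift (YM.actTwistedCoact (YM.mu.symm m)))
        (TensorProduct.assoc k N H H (map YN.coact HH.a.symm.toLinearMap (YN.coact x)))) := by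
  obtain ⟨m, rfl⟩ := YM.mu.surjective m
  obtain ⟨q, m₀, m₁, hm⟩ := exists_sum_tmul_eq (YM.coact m)
  simp only [hMN, YM.coact_mu, LinearEquiv.symm_apply_apply, YDModule.actTwistedCoact, hm]
  induction YN.coact x using TensorProduct.induction_on with
  | zero => simp
  | add u v hu hv => simp only [tmul_add, map_add, hu, hv]
  | tmul n h =>
    simp only [map_sum, sum_tmul, map_tmul, HomHopf.codiagonal_tmul, hc]
    induction YN.coact n using TensorProduct.induction_on with
    | zero => simp
    | add u v hu hv => simp only [map_add, add_tmul, Finset.sum_add_distrib, hu, hv]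
    | tmul n' g => simp [tmul_sum]

theorem coact_braiding_eq_map_braiding_coact (hA : IsHomHopfAuto HH A)
    (hB : IsHomHopfAuto HH B) {coactMN : (M ⊗[k] N) →ₗ[k] (M ⊗[k] N) ⊗[k] H}
    {coactNM : (N ⊗[k] M) →ₗ[k] (N ⊗[k] M) ⊗[k] H}
    (hc : ∀ m x, c (m ⊗ₜ[k] x)
      = map YN.mu.toLinearMap ((YM.act ∘ₗ B.symm.toLinearMap).flip (YM.mu.symm m)) (YN.coact x))
    (hMN : ∀ m x, coactMN (m ⊗ₜ[k] x) = HH.codiagonal (YM.coact m ⊗ₜ[k] YN.coact x))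
    (hNM : ∀ x m, coactNM (x ⊗ₜ[k] m) = HH.codiagonal
      ((A.toLinearMap ∘ₗ B.symm.toLinearMap).lTensor N (YN.coact x) ⊗ₜ[k] YM.coact m))
    (z : M ⊗[k] N) :
    coactNM (c z) = map c LinearMap.id (coactMN z) := by
  induction z using TensorProduct.induction_on with
  | zero => simp
  | add u v hu hv => simp only [map_add, hu, hv]
  | tmul m x =>
    rw [coact_braiding_eq hc hNM, map_braiding_coact_eq hc hMN, YN.assoc_map_coact_coact,
      ← LinearMap.comp_apply (map _ _) (map _ _), ← map_comp,
      YM.lift_twistedCoactAct_comp_comul hA hB, map_comp, LinearMap.comp_apply]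

end Braiding

theorem stmt_12_general {k : Type*} [Field k] {H : Type*} [AddCommGroup H] [Module k H]
    {M : Type*} [AddCommGroup M] [Module k M] {N : Type*} [AddCommGroup N] [Module k N]
    (HH : HomHopf k H) (A B C D : H ≃ₗ[k] H)
    (hA : IsHomHopfAuto HH A) (hB : IsHomHopfAuto HH B)
    (YM : YDModule HH A B M) (YN : YDModule HH C D N)
    (c : (M ⊗[k] N) →ₗ[k] (N ⊗[k] M))
    (hc : ∀ (m : M) (x : N) (q : ℕ) (n0 : Fin q → N) (n1 : Fin q → H),
      YN.coact x = ∑ l, n0 l ⊗ₜ[k] n1 l →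
      c (m ⊗ₜ[k] x) = ∑ l, YN.mu (n0 l) ⊗ₜ[k] YM.act (B.symm (n1 l)) (YM.mu.symm m))
    (coactMN : (M ⊗[k] N) →ₗ[k] (M ⊗[k] N) ⊗[k] H)
    (hcoactMN : ∀ (m : M) (x : N) (q : ℕ) (m0 : Fin q → M) (m1 : Fin q → H),
      YM.coact m = ∑ l, m0 l ⊗ₜ[k] m1 l →
      ∀ (r : ℕ) (n0 : Fin r → N) (n1 : Fin r → H),
      YN.coact x = ∑ t, n0 t ⊗ₜ[k] n1 t →
      coactMN (m ⊗ₜ[k] x) = ∑ l, ∑ t, (m0 l ⊗ₜ[k] n0 t) ⊗ₜ[k] HH.mul (n1 t) (m1 l))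
    (coactNM : (N ⊗[k] M) →ₗ[k] (N ⊗[k] M) ⊗[k] H)
    (hcoactNM : ∀ (x : N) (m : M) (q : ℕ) (m0 : Fin q → M) (m1 : Fin q → H),
      YM.coact m = ∑ l, m0 l ⊗ₜ[k] m1 l →
      ∀ (r : ℕ) (n0 : Fin r → N) (n1 : Fin r → H),
      YN.coact x = ∑ t, n0 t ⊗ₜ[k] n1 t →
      coactNM (x ⊗ₜ[k] m)
        = ∑ t, ∑ l, (n0 t ⊗ₜ[k] m0 l) ⊗ₜ[k] HH.mul (m1 l) (A (B.symm (n1 t)))) :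
    ∀ z : M ⊗[k] N,
      coactNM (c z) = (TensorProduct.map c LinearMap.id) (coactMN z) := by
  refine coact_braiding_eq_map_braiding_coact (YM := YM) (YN := YN) hA hB
    (fun m x => ?_) (fun m x => ?_) (fun x m => ?_)
  · obtain ⟨q, n₀, n₁, hx⟩ := exists_sum_tmul_eq (YN.coact x)
    rw [hc m x q n₀ n₁ hx, hx]
    simp [map_sum]
  · obtain ⟨q, m₀, m₁, hm⟩ := exists_sum_tmul_eq (YM.coact m)
    obtain ⟨r, n₀, n₁, hx⟩ := exists_sum_tmul_eq (YN.coact x)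
    rw [hcoactMN m x q m₀ m₁ hm r n₀ n₁ hx, hm, hx]
    simp [sum_tmul, tmul_sum, map_sum]
    exact Finset.sum_comm
  · obtain ⟨q, m₀, m₁, hm⟩ := exists_sum_tmul_eq (YM.coact m)
    obtain ⟨r, n₀, n₁, hx⟩ := exists_sum_tmul_eq (YN.coact x)
    rw [hcoactNM x m q m₀ m₁ hm r n₀ n₁ hx, hm, hx]
    simp [sum_tmul, tmul_sum, map_sum]
    exact Finset.sum_comm

/-- The braiding c_{M,N}(m⊗n) = ν(n₍₀₎) ⊗ B⁻¹(n₍₁₎)·μ⁻¹(m) is H-colinear: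
ρ_{ᴹN⊗M} ∘ c_{M,N} = (c_{M,N}⊗id) ∘ ρ_{M⊗N}, with codiagonal coactions and the
twisted coaction n ↦ n₍₀₎ ⊗ AB⁻¹(n₍₁₎) on ᴹN. -/
theorem stmt_12 {k : Type*} [Field k] {H : Type*} [AddCommGroup H] [Module k H]
    {M : Type*} [AddCommGroup M] [Module k M] {N : Type*} [AddCommGroup N] [Module k N]
    (HH : HomHopf k H) (A B C D : H ≃ₗ[k] H)
    (hA : IsHomHopfAuto HH A) (hB : IsHomHopfAuto HH B)
    (hC : IsHomHopfAuto HH C) (hD : IsHomHopfAuto HH D)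
    (YM : YDModule HH A B M) (YN : YDModule HH C D N)
    (c : (M ⊗[k] N) →ₗ[k] (N ⊗[k] M))
    (hc : ∀ (m : M) (x : N) (q : ℕ) (n0 : Fin q → N) (n1 : Fin q → H),
      YN.coact x = ∑ l, n0 l ⊗ₜ[k] n1 l →
      c (m ⊗ₜ[k] x) = ∑ l, YN.mu (n0 l) ⊗ₜ[k] YM.act (B.symm (n1 l)) (YM.mu.symm m))
    (coactMN : (M ⊗[k] N) →ₗ[k] (M ⊗[k] N) ⊗[k] H)
    (hcoactMN : ∀ (m : M) (x : N) (q : ℕ) (m0 : Fin q → M) (m1 : Fin q → H),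
      YM.coact m = ∑ l, m0 l ⊗ₜ[k] m1 l →
      ∀ (r : ℕ) (n0 : Fin r → N) (n1 : Fin r → H),
      YN.coact x = ∑ t, n0 t ⊗ₜ[k] n1 t →
      coactMN (m ⊗ₜ[k] x) = ∑ l, ∑ t, (m0 l ⊗ₜ[k] n0 t) ⊗ₜ[k] HH.mul (n1 t) (m1 l))
    (coactNM : (N ⊗[k] M) →ₗ[k] (N ⊗[k] M) ⊗[k] H)
    (hcoactNM : ∀ (x : N) (m : M) (q : ℕ) (m0 : Fin q → M) (m1 : Fin q → H),
      YM.coact m = ∑ l, m0 l ⊗ₜ[k] m1 l →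
      ∀ (r : ℕ) (n0 : Fin r → N) (n1 : Fin r → H),
      YN.coact x = ∑ t, n0 t ⊗ₜ[k] n1 t →
      coactNM (x ⊗ₜ[k] m)
        = ∑ t, ∑ l, (n0 t ⊗ₜ[k] m0 l) ⊗ₜ[k] HH.mul (m1 l) (A (B.symm (n1 t)))) :
    ∀ z : M ⊗[k] N,
      coactNM (c z) = (TensorProduct.map c LinearMap.id) (coactMN z) :=
  stmt_12_general HH A B C D hA hB YM YN c hc coactMN hcoactMN coactNM hcoactNM
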